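/- Let V be an (n+1)-dimensional real vector space, J : V → V linear with ker J ⊇ span(ξ), ξ ≠ 0, and suppose Λⁿ J ≠ 0, so that Λⁿ J = τ ⊗ W for some nonzero n-form τ ∈ (ΛⁿV)* and nonzero n-vector W ∈ ΛⁿV, with trace(Λⁿ J) = τ(W). If additionally V carries a nondegenerate symmetric bilinear form g making J g-self-adjoint, and τ(W) = 0, then g(ξ, ξ) = 0. -/

import Mathlib

/-!
`Λⁿ J = τ ⊗ W` is nonzero, so `rank J ≥ n`; as `J ξ = 0` this forces `ker J = span {ξ}`.
Since `τ(W) = 0`, `Λⁿ (J²) = (τ ⊗ W)² = τ(W) (τ ⊗ W) = 0`, so `rank J² < n = rank J`. Hence some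
`η` has `J η ≠ 0` and `J² η = 0`, i.e. `J η = c ξ` with `c ≠ 0`, and self-adjointness gives
`c² g(ξ, ξ) = g(J η, J η) = g(η, J² η) = 0`.
-/

open Module

namespace exteriorPower

lemma coe_map {R V N : Type*} [CommRing R] [AddCommGroup V] [Module R V] [AddCommGroup N]
    [Module R N] {n : ℕ} (f : V →ₗ[R] N) (x : ⋀[R]^n V) :
    (map n f x : ExteriorAlgebra R N) = ExteriorAlgebra.map f x := by
  have : (⋀[R]^n N).subtype ∘ₗ map n f
      = (ExteriorAlgebra.map f).toLinearMap ∘ₗ (⋀[R]^n V).subtype := by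
    ext m
    simp [ExteriorAlgebra.map_apply_ιMulti]
  exact congr($this x)

variable {K V N : Type*} [Field K] [AddCommGroup V] [Module K V] [AddCommGroup N] [Module K N]
  {n : ℕ}

lemma ιMulti_ne_zero_of_linearIndependent {v : Fin n → V} (hv : LinearIndependent K v) :
    ιMulti K n v ≠ 0 := by
  simpa [ιMulti_family] using
    (ιMulti_family_linearIndependent_field (n := n) hv).ne_zero
      (Set.powersetCard.ofFinEmbEquiv (OrderIso.refl (Fin n)).toOrderEmbedding)

lemma map_eq_zero_iff [FiniteDimensional K V] {f : V →ₗ[K] N} :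
    map n f = 0 ↔ finrank K (LinearMap.range f) < n := by
  constructor
  · intro h
    by_contra! hle
    let u : Fin n → LinearMap.range f := finBasis K _ ∘ Fin.castLE hle
    have hu : LinearIndependent K u :=
      (finBasis K _).linearIndependent.comp _ (Fin.castLE_injective hle)
    choose v hv using fun i ↦ (u i).2
    have hfv : f ∘ v = (LinearMap.range f).subtype ∘ u := funext hv
    apply ιMulti_ne_zero_of_linearIndependent (hu.map' _ (Submodule.ker_subtype _))
    rw [← hfv, ← map_apply_ιMulti, h, LinearMap.zero_apply]
  · intro h
    ext m
    simp only [LinearMap.compAlternatingMap_apply, map_apply_ιMulti, LinearMap.zero_apply]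
    refine AlternatingMap.map_linearDependent _ _ fun hli ↦ h.not_ge ?_
    have : LinearIndependent K (f.rangeRestrict ∘ m) := LinearIndependent.of_comp
      (LinearMap.range f).subtype (by simpa [Function.comp_def] using hli)
    simpa using this.fintype_card_le_finrank

end exteriorPower

lemma LinearMap.exists_apply_ne_zero_apply_apply_eq_zero {K V : Type*} [Field K] [AddCommGroup V]
    [Module K V] [FiniteDimensional K V] {J : V →ₗ[K] V}
    (h : finrank K (range (J ∘ₗ J)) < finrank K (range J)) :
    ∃ η, J η ≠ 0 ∧ J (J η) = 0 := by
  by_contra! hinj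
  have hker : ker (J ∘ₗ J) = ker J :=
    le_antisymm (fun η hη ↦ by_contra fun hJη ↦ hinj η hJη hη) (ker_le_ker_comp J J)
  have := finrank_range_add_finrank_ker (J ∘ₗ J)
  have := finrank_range_add_finrank_ker J
  rw [hker] at *
  omega

theorem stmt12_general (n : ℕ) (V : Type*) [AddCommGroup V] [Module ℝ V] [FiniteDimensional ℝ V]
    (hdim : Module.finrank ℝ V = n + 1)
    (J : V →ₗ[ℝ] V) (ξ : V) (hξ : ξ ≠ 0) (hJξ : J ξ = 0)
    (g : V →ₗ[ℝ] V →ₗ[ℝ] ℝ)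
    (hsa : ∀ x y, g (J x) y = g x (J y))
    (τ : (⋀[ℝ]^n V) →ₗ[ℝ] ℝ) (W : ⋀[ℝ]^n V) (hτ : τ ≠ 0) (hW : W ≠ 0)
    (hrep : ∀ x : ⋀[ℝ]^n V,
      ExteriorAlgebra.map J (x : ExteriorAlgebra ℝ V) = τ x • (W : ExteriorAlgebra ℝ V))
    (htr : τ W = 0) :
    g ξ ξ = 0 := by
  have hΛJ : exteriorPower.map n J = τ.smulRight W :=
    LinearMap.ext fun x ↦ Subtype.ext ((exteriorPower.coe_map J x).trans (hrep x))
  have hrank : n ≤ finrank ℝ (LinearMap.range J) := by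
    rw [← not_lt, ← exteriorPower.map_eq_zero_iff, hΛJ]
    obtain ⟨x, hx⟩ := DFunLike.ne_iff.mp hτ
    exact DFunLike.ne_iff.mpr ⟨x, by simpa [hW] using hx⟩
  have hrank_sq : finrank ℝ (LinearMap.range (J ∘ₗ J)) < n := by
    rw [← exteriorPower.map_eq_zero_iff, exteriorPower.map_comp, hΛJ]
    refine LinearMap.ext fun x ↦ ?_
    simp [htr]
  obtain ⟨η, hJη, hJJη⟩ := J.exists_apply_ne_zero_apply_apply_eq_zero (hrank_sq.trans_le hrank)
  have hker : Submodule.span ℝ {ξ} = LinearMap.ker J := by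
    refine Submodule.eq_of_le_of_finrank_le (by simpa using hJξ) ?_
    have := J.finrank_range_add_finrank_ker
    rw [finrank_span_singleton hξ]
    omega
  obtain ⟨c, hc⟩ := Submodule.mem_span_singleton.mp (hker ▸ hJJη : J η ∈ Submodule.span ℝ {ξ})
  have hc0 : c ≠ 0 := by rintro rfl; exact hJη (by simp [← hc])
  have hgJη : g (J η) (J η) = 0 := by rw [hsa, hJJη, map_zero]
  simpa [← hc, hc0] using hgJη

/-- Let `J` kill `ξ ≠ 0` on an `(n+1)`-dimensional space, with `Λⁿ J ≠ 0` written
as the rank-one operator `τ ⊗ W` on `⋀ⁿ V` (so `trace(Λⁿ J) = τ(W)`).  If `V`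
carries a nondegenerate symmetric bilinear form `g` making `J` self-adjoint and
`τ(W) = 0`, then `ξ` is isotropic: `g(ξ, ξ) = 0`. -/
theorem stmt12 (n : ℕ) (V : Type*) [AddCommGroup V] [Module ℝ V] [FiniteDimensional ℝ V]
    (hdim : Module.finrank ℝ V = n + 1)
    (J : V →ₗ[ℝ] V) (ξ : V) (hξ : ξ ≠ 0) (hJξ : J ξ = 0)
    (g : V →ₗ[ℝ] V →ₗ[ℝ] ℝ) (hgsym : ∀ x y, g x y = g y x)
    (hgnd : ∀ x, (∀ y, g x y = 0) → x = 0)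
    (hsa : ∀ x y, g (J x) y = g x (J y))
    (τ : (⋀[ℝ]^n V) →ₗ[ℝ] ℝ) (W : ⋀[ℝ]^n V) (hτ : τ ≠ 0) (hW : W ≠ 0)
    (hrep : ∀ x : ⋀[ℝ]^n V,
      ExteriorAlgebra.map J (x : ExteriorAlgebra ℝ V) = τ x • (W : ExteriorAlgebra ℝ V))
    (htr : τ W = 0) :
    g ξ ξ = 0 :=
  stmt12_general n V hdim J ξ hξ hJξ g hsa τ W hτ hW hrep htr
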